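/- arXiv:1309.3950 — 3 statements merged into one kernel-verified Lean document; each statement's English description precedes it below -/
import Mathlib

section
/- Let q(x) = -2/⟨x⟩² on ℝ² and φ₀ a unit vector in ℂ². Then ψ(x) = ⟨x⟩⁻² (I₂ + i σ·x) φ₀ satisfies (-i σ·∇ + q) ψ = 0 pointwise on ℝ², where σ·∇ = σ₁∂₁ + σ₂∂₂ and σ·x = x₁σ₁ + x₂σ₂. -/
open Matrix Complex MeasureTheory Filter
open scoped RealInnerProductSpace Matrix.Norms.L2Operator

noncomputable section

abbrev R2 := EuclideanSpace ℝ (Fin 2)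
abbrev C2 := EuclideanSpace ℂ (Fin 2)

/-- The Pauli matrices σ₁, σ₂ (the ones appearing in the 2-d massless Dirac operator). -/
def pauli2 : Fin 2 → Matrix (Fin 2) (Fin 2) ℂ :=
  ![!![0, 1; 1, 0], !![0, -I; I, 0]]

/-- σ·v = v₁σ₁ + v₂σ₂. -/
def sigmaDot (v : EuclideanSpace ℝ (Fin 2)) : Matrix (Fin 2) (Fin 2) ℂ :=
  ∑ j, (v j : ℂ) • pauli2 j

/-- Matrix acting on a Euclidean (ℓ²) vector. -/
def mulVecE {n : ℕ} (M : Matrix (Fin n) (Fin n) ℂ) (v : EuclideanSpace ℂ (Fin n)) :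
    EuclideanSpace ℂ (Fin n) :=
  (WithLp.equiv 2 _).symm (M.mulVec ((WithLp.equiv 2 _) v))

/-- The 2-d massless Dirac operator (-i σ·∇ f)(x), defined pointwise. -/
def diracOp2 (f : R2 → C2) (x : R2) : C2 :=
  (-I) • ∑ j, mulVecE (pauli2 j) (fderiv ℝ f x (EuclideanSpace.single j 1))

/-! With `S = σ·x`, the Pauli relations give `σ_j² = 1` and `S² = |x|²`. Writing
`ψ = ⟨x⟩⁻² (1 + i S) φ₀`, the product rule gives `∂_j ψ = (⟨x⟩⁻² i σ_j - 2 x_j ⟨x⟩⁻⁴ (1 + i S)) φ₀`,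
hence `-i σ·∇ψ = (2 ⟨x⟩⁻² - 2 ⟨x⟩⁻⁴ |x|² + 2 i ⟨x⟩⁻⁴ S) φ₀ = 2 ⟨x⟩⁻² ψ = -q ψ`. -/

section mulVecE

variable {n : ℕ} (A B : Matrix (Fin n) (Fin n) ℂ) (v : EuclideanSpace ℂ (Fin n))

@[simp] lemma mulVecE_one : mulVecE 1 v = v := by
  simp [mulVecE]

@[simp] lemma mulVecE_add_left : mulVecE (A + B) v = mulVecE A v + mulVecE B v := by
  simp [mulVecE, Matrix.add_mulVec]

@[simp] lemma mulVecE_smul_left (a : ℂ) : mulVecE (a • A) v = a • mulVecE A v := by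
  simp [mulVecE, Matrix.smul_mulVec]

lemma mulVecE_sum_left {ι : Type*} (s : Finset ι) (M : ι → Matrix (Fin n) (Fin n) ℂ) :
    mulVecE (∑ i ∈ s, M i) v = ∑ i ∈ s, mulVecE (M i) v := by
  simp [mulVecE, Matrix.sum_mulVec]

lemma mulVecE_mul : mulVecE (A * B) v = mulVecE A (mulVecE B v) := by
  simp [mulVecE, Matrix.mulVec_mulVec]

end mulVecE

lemma pauli2_mul_self (j : Fin 2) : pauli2 j * pauli2 j = 1 := by
  fin_cases j <;> ext a b <;> fin_cases a <;> fin_cases b <;> simp [pauli2]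

lemma sigmaDot_mul_self (v : R2) : sigmaDot v * sigmaDot v = ((‖v‖ ^ 2 : ℝ) : ℂ) • 1 := by
  rw [EuclideanSpace.norm_sq_eq, Fin.sum_univ_two]
  ext a b
  fin_cases a <;> fin_cases b <;> simp [sigmaDot, pauli2] <;> ring_nf <;> simp [I_sq]

lemma sigmaDot_single (j : Fin 2) : sigmaDot (EuclideanSpace.single j 1) = pauli2 j := by
  fin_cases j <;> simp [sigmaDot]

lemma neg_I_smul_sum_pauli2_mul_eq {c : ℂ} {x : R2} (hc : c * (1 + ((‖x‖ ^ 2 : ℝ) : ℂ)) = 1) :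
    -I • ∑ j, pauli2 j * ((c * I) • pauli2 j + (-2 * c ^ 2 * (x j : ℂ)) • (1 + I • sigmaDot x))
      = (2 * c ^ 2) • (1 + I • sigmaDot x) := by
  have h_sigmaDot : ∑ j, pauli2 j * ((-2 * c ^ 2 * (x j : ℂ)) • (1 + I • sigmaDot x)) =
      (-2 * c ^ 2) • (sigmaDot x * (1 + I • sigmaDot x)) := by
    simp only [sigmaDot, Finset.sum_mul, Finset.smul_sum, mul_smul_comm, smul_mul_assoc, smul_smul]
  have h_trace : ∑ j, pauli2 j * pauli2 j = (2 : ℂ) • 1 := by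
    simp [pauli2_mul_self, two_smul]
  rw [Finset.sum_congr rfl fun j _ => mul_add _ _ _, Finset.sum_add_distrib, h_sigmaDot, mul_add,
    mul_smul_comm, sigmaDot_mul_self]
  simp only [mul_smul_comm, ← Finset.smul_sum, h_trace, mul_one]
  linear_combination (norm := module) (-2 * c) • hc • (1 : Matrix (Fin 2) (Fin 2) ℂ) +
    (2 * c ^ 2 * ((‖x‖ ^ 2 : ℝ) : ℂ) - 2 * c) • I_sq • (1 : Matrix (Fin 2) (Fin 2) ℂ)

def bracketInvSq (y : R2) : ℝ := (1 + ‖y‖ ^ 2)⁻¹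

lemma ofReal_bracketInvSq_mul (x : R2) :
    (bracketInvSq x : ℂ) * (1 + ((‖x‖ ^ 2 : ℝ) : ℂ)) = 1 := by
  rw [bracketInvSq, ← ofReal_one, ← ofReal_add, ← ofReal_mul, inv_mul_cancel₀ (by positivity),
    ofReal_one]

lemma hasFDerivAt_bracketInvSq (x : R2) :
    HasFDerivAt bracketInvSq ((-2 * bracketInvSq x ^ 2) • innerSL ℝ x) x := by
  have hpos : 1 + ‖x‖ ^ 2 ≠ 0 := by positivity
  refine ((hasDerivAt_inv hpos).comp_hasFDerivAt x
    ((hasStrictFDerivAt_norm_sq x).hasFDerivAt.const_add 1)).congr_fderiv ?_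
  ext y
  simp [bracketInvSq]
  ring

def pauliAction (v : C2) : R2 →L[ℝ] C2 :=
  LinearMap.toContinuousLinearMap
    { toFun := fun y => mulVecE (sigmaDot y) v
      map_add' := fun y z => by simp [sigmaDot, add_smul, Finset.sum_add_distrib]
      map_smul' := fun r y => by
        simp only [sigmaDot, mulVecE_sum_left, mulVecE_smul_left, Finset.smul_sum,
          PiLp.smul_apply, smul_eq_mul, ofReal_mul, mul_smul, RingHom.id_apply]
        rfl }

lemma pauliAction_apply (v : C2) (y : R2) : pauliAction v y = mulVecE (sigmaDot y) v := rfl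

def resonance (φ₀ : C2) (y : R2) : C2 := (bracketInvSq y : ℂ) • mulVecE (1 + I • sigmaDot y) φ₀

lemma fderiv_resonance_single (φ₀ : C2) (x : R2) (j : Fin 2) :
    fderiv ℝ (resonance φ₀) x (EuclideanSpace.single j 1) =
      mulVecE (((bracketInvSq x : ℂ) * I) • pauli2 j +
        (-2 * (bracketInvSq x : ℂ) ^ 2 * x j) • (1 + I • sigmaDot x)) φ₀ := by
  have hc : HasFDerivAt (fun y => (bracketInvSq y : ℂ))
      (ofRealCLM.comp ((-2 * bracketInvSq x ^ 2) • innerSL ℝ x)) x :=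
    ofRealCLM.hasFDerivAt.comp x (hasFDerivAt_bracketInvSq x)
  have hg : HasFDerivAt (fun y => mulVecE (1 + I • sigmaDot y) φ₀) (I • pauliAction φ₀) x := by
    have h_affine : (fun y => mulVecE (1 + I • sigmaDot y) φ₀) =
        fun y => φ₀ + I • pauliAction φ₀ y := by
      funext y
      simp [pauliAction_apply]
    rw [h_affine]
    exact ((pauliAction φ₀).hasFDerivAt.const_smul I).const_add φ₀
  rw [show resonance φ₀ = (fun y => (bracketInvSq y : ℂ)) • fun y => mulVecE (1 + I • sigmaDot y) φ₀
    from rfl, (hc.smul hg).fderiv]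
  simp only [_root_.add_apply, FunLike.coe_smul, Pi.smul_apply,
    ContinuousLinearMap.smulRight_apply, ContinuousLinearMap.comp_apply, pauliAction_apply,
    sigmaDot_single, innerSL_apply_apply, EuclideanSpace.inner_single_right, ofRealCLM_apply,
    mulVecE_add_left, mulVecE_smul_left, mulVecE_one, conj_trivial, one_mul, smul_eq_mul]
  push_cast
  module

lemma diracOp2_resonance (φ₀ : C2) (x : R2) :
    diracOp2 (resonance φ₀) x = (2 * bracketInvSq x : ℂ) • resonance φ₀ x := by
  calc diracOp2 (resonance φ₀) x
      = mulVecE (-I • ∑ j, pauli2 j * (((bracketInvSq x : ℂ) * I) • pauli2 j +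
          (-2 * (bracketInvSq x : ℂ) ^ 2 * x j) • (1 + I • sigmaDot x))) φ₀ := by
        simp only [diracOp2, fderiv_resonance_single, mulVecE_smul_left, mulVecE_sum_left,
          mulVecE_mul]
    _ = mulVecE ((2 * (bracketInvSq x : ℂ) ^ 2) • (1 + I • sigmaDot x)) φ₀ := by
        rw [neg_I_smul_sum_pauli2_mul_eq (ofReal_bracketInvSq_mul x)]
    _ = (2 * bracketInvSq x : ℂ) • resonance φ₀ x := by
        rw [resonance, mulVecE_smul_left, smul_smul]
        ring_nf

theorem stmt2_general (φ₀ : C2)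
    (q : R2 → ℝ) (hq : ∀ x, q x = -2 / (1 + ‖x‖ ^ 2))
    (ψ : R2 → C2)
    (hψ : ∀ x, ψ x =
      ((Real.sqrt (1 + ‖x‖ ^ 2) : ℂ)) ⁻¹ ^ 2 • mulVecE (1 + I • sigmaDot x) φ₀) :
    ∀ x, diracOp2 ψ x + (q x : ℂ) • ψ x = 0 := by
  have hψ_eq : ψ = resonance φ₀ := funext fun x => by
    rw [hψ, resonance, bracketInvSq, inv_pow, ← ofReal_pow, Real.sq_sqrt (by positivity),
      ofReal_inv]
  intro x
  have hq_eq : (q x : ℂ) = -(2 * bracketInvSq x : ℂ) := by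
    rw [hq, bracketInvSq]
    push_cast
    ring
  rw [hψ_eq, diracOp2_resonance, hq_eq, neg_smul, add_neg_cancel]

/-- The zero resonance of the 2-d massless Dirac operator with potential q(x) = -2/⟨x⟩². -/
theorem stmt2 (φ₀ : C2) (hφ : ‖φ₀‖ = 1)
    (q : R2 → ℝ) (hq : ∀ x, q x = -2 / (1 + ‖x‖ ^ 2))
    (ψ : R2 → C2)
    (hψ : ∀ x, ψ x =
      ((Real.sqrt (1 + ‖x‖ ^ 2) : ℂ)) ⁻¹ ^ 2 • mulVecE (1 + I • sigmaDot x) φ₀) :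
    ∀ x, diracOp2 ψ x + (q x : ℂ) • ψ x = 0 :=
  stmt2_general φ₀ q hq ψ hψ
end
end

section
/- For any vector v ∈ ℝ³ and spinor u ∈ ℂ⁴, the Dirac matrix contraction satisfies |(α·v) u| = |v| · |u|, where |·| denotes the ℂ⁴ Euclidean norm. -/
open Matrix Complex MeasureTheory Filter
open scoped RealInnerProductSpace Matrix.Norms.L2Operator

noncomputable section

abbrev R3 := EuclideanSpace ℝ (Fin 3)
abbrev C4 := EuclideanSpace ℂ (Fin 4)

/-- The Pauli matrices σ₁, σ₂, σ₃. -/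
def pauli : Fin 3 → Matrix (Fin 2) (Fin 2) ℂ :=
  ![!![0, 1; 1, 0], !![0, -I; I, 0], !![1, 0; 0, -1]]

/-- The standard 4×4 Dirac alpha matrices αⱼ = [[0,σⱼ],[σⱼ,0]]. -/
def diracAlpha (j : Fin 3) : Matrix (Fin 4) (Fin 4) ℂ :=
  Matrix.reindex finSumFinEquiv finSumFinEquiv
    (Matrix.fromBlocks 0 (pauli j) (pauli j) 0)

/-- α·v = v₁α₁ + v₂α₂ + v₃α₃. -/
def alphaDot (v : EuclideanSpace ℝ (Fin 3)) : Matrix (Fin 4) (Fin 4) ℂ :=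
  ∑ j, (v j : ℂ) • diracAlpha j

/-- The massless Dirac operator (-i α·∇ f)(x), defined pointwise. -/
def diracOp (f : R3 → C4) (x : R3) : C4 :=
  (-I) • ∑ j, mulVecE (diracAlpha j) (fderiv ℝ f x (EuclideanSpace.single j 1))

/-!
The matrices αⱼ are Hermitian and satisfy the Clifford relations αᵢαⱼ + αⱼαᵢ = 2δᵢⱼ, which they
inherit from the Pauli matrices through the block form [[0,σⱼ],[σⱼ,0]]. Expanding the square of
α·v and symmetrising, (α·v)ᴴ(α·v) = (α·v)² = |v|², hence
|(α·v)u|² = ⟨u, (α·v)ᴴ(α·v)u⟩ = |v|²|u|².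
-/

theorem sum_smul_mul_self_of_anticomm {ι R A : Type*} [Fintype ι] [DecidableEq ι] [Field R]
    [CharZero R] [Ring A] [Algebra R A] (e : ι → A)
    (he : ∀ i j, e i * e j + e j * e i = if i = j then 2 else 0) (a : ι → R) :
    (∑ i, a i • e i) * (∑ i, a i • e i) = algebraMap R A (∑ i, a i ^ 2) := by
  have hx : (∑ i, a i • e i) * (∑ i, a i • e i) = ∑ i, ∑ j, (a i * a j) • (e i * e j) := by
    simp only [Finset.sum_mul_sum, smul_mul_smul_comm]
  apply smul_right_injective A (two_ne_zero : (2 : R) ≠ 0)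
  calc (2 : R) • ((∑ i, a i • e i) * (∑ i, a i • e i))
      = ∑ i, ∑ j, (a i * a j) • (e i * e j + e j * e i) := by
        rw [two_smul, hx]
        conv_lhs => arg 2; rw [Finset.sum_comm]
        simp only [← Finset.sum_add_distrib, smul_add]
        refine Finset.sum_congr rfl fun i _ => Finset.sum_congr rfl fun j _ => ?_
        rw [mul_comm (a j)]
    _ = ∑ i, (a i * a i) • (2 : A) := by
        simp only [he, smul_ite, smul_zero, Finset.sum_ite_eq, Finset.mem_univ, if_true]
    _ = (2 : R) • algebraMap R A (∑ i, a i ^ 2) := by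
        rw [map_sum, Finset.smul_sum]
        refine Finset.sum_congr rfl fun i _ => ?_
        rw [Algebra.smul_def, Algebra.smul_def, ← map_ofNat (algebraMap R A) 2, ← map_mul,
          ← map_mul, sq, mul_comm]

theorem fromBlocks_zero_self_mul {m α : Type*} [Fintype m] [NonUnitalNonAssocSemiring α]
    (A B : Matrix m m α) :
    fromBlocks 0 A A 0 * fromBlocks 0 B B 0 = fromBlocks (A * B) 0 0 (A * B) := by
  simp [fromBlocks_multiply]

theorem mulVecE_eq_toEuclideanLin {n : ℕ} (M : Matrix (Fin n) (Fin n) ℂ)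
    (u : EuclideanSpace ℂ (Fin n)) : mulVecE M u = M.toEuclideanLin u := rfl

theorem norm_mulVecE_of_conjTranspose_mul_self {n : ℕ} {M : Matrix (Fin n) (Fin n) ℂ} {r : ℝ}
    (hr : 0 ≤ r) (hM : Mᴴ * M = (r : ℂ) ^ 2 • (1 : Matrix (Fin n) (Fin n) ℂ))
    (u : EuclideanSpace ℂ (Fin n)) : ‖mulVecE M u‖ = r * ‖u‖ := by
  have hsq : ‖mulVecE M u‖ ^ 2 = (r * ‖u‖) ^ 2 := by
    rw [← inner_self_eq_norm_sq (𝕜 := ℂ), mulVecE_eq_toEuclideanLin,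
      ← LinearMap.adjoint_inner_right, ← toEuclideanLin_conjTranspose_eq_adjoint]
    simp only [toLpLin_apply, mulVec_mulVec, hM, smul_mulVec, one_mulVec, WithLp.toLp_smul,
      WithLp.toLp_ofLp, inner_smul_right, inner_self_eq_norm_sq_to_K, coe_algebraMap,
      ← ofReal_pow, ← ofReal_mul, RCLike.re_to_complex, ofReal_re, mul_pow]
  exact (sq_eq_sq₀ (norm_nonneg _) (by positivity)).mp hsq

theorem pauli_isHermitian (j : Fin 3) : (pauli j).IsHermitian := by
  fin_cases j <;> ext a b <;> fin_cases a <;> fin_cases b <;> simp [pauli]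

theorem pauli_mul_add_mul (i j : Fin 3) :
    pauli i * pauli j + pauli j * pauli i = if i = j then 2 else 0 := by
  fin_cases i <;> fin_cases j <;> ext a b <;> fin_cases a <;> fin_cases b <;>
    simp [pauli, ofNat_apply] <;> norm_num

theorem diracAlpha_isHermitian (j : Fin 3) : (diracAlpha j).IsHermitian :=
  (IsHermitian.fromBlocks isHermitian_zero (pauli_isHermitian j) isHermitian_zero).submatrix _

theorem diracAlpha_mul_add_mul (i j : Fin 3) :
    diracAlpha i * diracAlpha j + diracAlpha j * diracAlpha i = if i = j then 2 else 0 := by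
  have hα : ∀ k, diracAlpha k =
      reindexAlgEquiv ℂ ℂ finSumFinEquiv (fromBlocks 0 (pauli k) (pauli k) 0) := fun _ => rfl
  simp only [hα, ← map_mul, ← map_add, fromBlocks_zero_self_mul, fromBlocks_add,
    pauli_mul_add_mul, add_zero]
  split_ifs
  · have h2 : (fromBlocks 2 0 0 2 : Matrix (Fin 2 ⊕ Fin 2) (Fin 2 ⊕ Fin 2) ℂ) = 2 := by
      ext (a | a) (b | b) <;> simp [ofNat_apply]
    rw [h2, map_ofNat]
  · simp

theorem alphaDot_isHermitian (v : R3) : (alphaDot v).IsHermitian :=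
  isHermitian_iff_isSelfAdjoint.mpr <| isSelfAdjoint_sum _ fun j _ =>
    ((diracAlpha_isHermitian j).smul (Complex.conj_ofReal (v j))).isSelfAdjoint

theorem alphaDot_mul_self (v : R3) :
    alphaDot v * alphaDot v = (‖v‖ : ℂ) ^ 2 • (1 : Matrix (Fin 4) (Fin 4) ℂ) := by
  rw [alphaDot, sum_smul_mul_self_of_anticomm _ diracAlpha_mul_add_mul,
    Algebra.algebraMap_eq_smul_one, ← ofReal_pow, EuclideanSpace.norm_sq_eq]
  simp only [Real.norm_eq_abs, sq_abs, ofReal_sum, ofReal_pow]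

/-- |(α·v)u| = |v||u| for every v ∈ ℝ³, u ∈ ℂ⁴. -/
theorem stmt4 (v : R3) (u : C4) : ‖mulVecE (alphaDot v) u‖ = ‖v‖ * ‖u‖ := by
  refine norm_mulVecE_of_conjTranspose_mul_self (norm_nonneg v) ?_ u
  rw [(alphaDot_isHermitian v).eq, alphaDot_mul_self]
end
end

section
/- Let λ ∈ ℝ, k ∈ ℝ³ a unit vector, η ∈ C^∞(ℝ;ℝ), φ ∈ C^∞(B;ℝ) on an open ball B ⊂ ℝ³, ξ(t) := ∫₀ᵗ η, and φ₀ ∈ ℂ⁴ a unit vector with (α·k)φ₀ = φ₀. Define F(x) := exp(−i(α·k)ξ(x·k + φ(x))) e^{iλ x·k} φ₀ and q̃(x) := η(x·k + φ(x)). Then |F(x)| = 1 and −iα·∇F(x) = λF(x) − q̃(x)F(x) − (α·∇φ(x))(α·k) q̃(x) F(x) for all x ∈ B. -/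
open Matrix Complex MeasureTheory Filter
open scoped RealInnerProductSpace Matrix.Norms.L2Operator

noncomputable section

lemma mulVecE_smul {n : ℕ} (M : Matrix (Fin n) (Fin n) ℂ) (c : ℂ) (v : EuclideanSpace ℂ (Fin n)) :
    mulVecE M (c • v) = c • mulVecE M v := by
  simp [mulVecE, Matrix.mulVec_smul]

lemma mulVecE_smulM {n : ℕ} (M : Matrix (Fin n) (Fin n) ℂ) (c : ℂ) (v : EuclideanSpace ℂ (Fin n)) :
    mulVecE (c • M) v = c • mulVecE M v := by
  simp [mulVecE, Matrix.smul_mulVec]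

def mulVecEL {n : ℕ} (v : EuclideanSpace ℂ (Fin n)) :
    Matrix (Fin n) (Fin n) ℂ →ₗ[ℂ] EuclideanSpace ℂ (Fin n) where
  toFun := fun M => mulVecE M v
  map_add' := fun M N => by simp [mulVecE, Matrix.add_mulVec]
  map_smul' := fun c M => by simp [mulVecE_smulM]

lemma mulVecE_sum {n : ℕ} {ι : Type*} (s : Finset ι) (M : ι → Matrix (Fin n) (Fin n) ℂ)
    (v : EuclideanSpace ℂ (Fin n)) :
    mulVecE (∑ j ∈ s, M j) v = ∑ j ∈ s, mulVecE (M j) v :=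
  map_sum (mulVecEL v) M s

lemma mulVecE_mul_s19 {n : ℕ} (M N : Matrix (Fin n) (Fin n) ℂ) (v : EuclideanSpace ℂ (Fin n)) :
    mulVecE (M * N) v = mulVecE M (mulVecE N v) := by
  simp [mulVecE, Matrix.mulVec_mulVec]

lemma mulVecE_pow {n : ℕ} (A : Matrix (Fin n) (Fin n) ℂ) (v : EuclideanSpace ℂ (Fin n))
    (hv : mulVecE A v = v) : ∀ m : ℕ, mulVecE (A ^ m) v = v := by
  intro m
  induction m with
  | zero => simp [mulVecE]
  | succ m ih => rw [pow_succ, mulVecE_mul_s19, hv, ih]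

lemma mulVecE_exp_smul {n : ℕ} (A : Matrix (Fin n) (Fin n) ℂ) (v : EuclideanSpace ℂ (Fin n))
    (hv : mulVecE A v = v) (c : ℂ) :
    mulVecE (NormedSpace.exp (c • A)) v = Complex.exp c • v := by
  have hL : Continuous (mulVecEL v) := (mulVecEL v).continuous_of_finiteDimensional
  have key : mulVecE (NormedSpace.exp (c • A)) v = mulVecEL v (NormedSpace.exp (c • A)) := rfl
  have hsum : Summable fun m : ℕ => ((m.factorial : ℂ))⁻¹ • (c • A) ^ m :=
    NormedSpace.expSeries_summable' (c • A)
  have hmap := (hsum.hasSum.map (mulVecEL v).toAddMonoidHom hL).tsum_eq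
  rw [key, NormedSpace.exp_eq_tsum (𝕂 := ℂ)]
  show (mulVecEL v) (∑' m : ℕ, ((m.factorial : ℂ))⁻¹ • (c • A) ^ m) = _
  erw [← hmap]
  have hcoef : ∀ m : ℕ, (mulVecEL v).toAddMonoidHom (((m.factorial : ℂ))⁻¹ • (c • A) ^ m)
      = (((m.factorial : ℂ))⁻¹ * c ^ m) • v := by
    intro m
    show mulVecE (((m.factorial : ℂ))⁻¹ • (c • A) ^ m) v = _
    rw [mulVecE_smulM, smul_pow, mulVecE_smulM, mulVecE_pow A v hv m, smul_smul]
  simp only [Function.comp_def]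
  rw [tsum_congr hcoef, Summable.tsum_smul_const]
  · congr 1
    rw [Complex.exp_eq_exp_ℂ, NormedSpace.exp_eq_tsum (𝕂 := ℂ)]
    exact tsum_congr fun m => by rw [smul_eq_mul]
  · exact (NormedSpace.expSeries_summable' (𝕂 := ℂ) c).congr fun m => by rw [smul_eq_mul]

/-- The curved plane-wave ansatz F(x) = exp(-i(α·k)ξ(x·k + φ(x))) e^{iλx·k} φ₀ on a ball B
has norm one and satisfies -iα·∇F = λF - q̃F - (α·∇φ)(α·k)q̃F, where q̃(x) = η(x·k + φ(x)). -/
theorem stmt19 (lam : ℝ) (k : R3) (hk : ‖k‖ = 1) (a : R3) (r : ℝ) (hr : 0 < r)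
    (η : ℝ → ℝ) (hη : ContDiff ℝ (⊤ : ℕ∞) η)
    (φf : R3 → ℝ) (hφf : ContDiffOn ℝ (⊤ : ℕ∞) φf (Metric.ball a r))
    (ξ : ℝ → ℝ) (hξ : ∀ t, ξ t = ∫ τ in (0:ℝ)..t, η τ)
    (φ₀ : C4) (hφ : ‖φ₀‖ = 1) (hφk : mulVecE (alphaDot k) φ₀ = φ₀)
    (F : R3 → C4)
    (hF : ∀ x, F x = mulVecE
        (NormedSpace.exp ((-(I * (ξ ((⟪x, k⟫ : ℝ) + φf x)))) • alphaDot k))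
        (Complex.exp (I * lam * (⟪x, k⟫ : ℝ)) • φ₀))
    (qt : R3 → ℝ) (hqt : ∀ x, qt x = η ((⟪x, k⟫ : ℝ) + φf x)) :
    ∀ x ∈ Metric.ball a r, ‖F x‖ = 1 ∧
      diracOp F x = (lam : ℂ) • F x - ((qt x : ℝ) : ℂ) • F x -
        ((qt x : ℝ) : ℂ) • mulVecE
          ((∑ j, ((fderiv ℝ φf x (EuclideanSpace.single j 1) : ℝ) : ℂ) • diracAlpha j) *
            alphaDot k) (F x) := by
  intro x hx
  -- the scalar form of F
  set Efun : R3 → ℂ :=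
    fun y => Complex.exp (I * lam * ((⟪y, k⟫ : ℝ) : ℂ) - I * ((ξ ((⟪y, k⟫ : ℝ) + φf y) : ℝ) : ℂ))
    with hEfun
  have hFE : ∀ y, F y = Efun y • φ₀ := by
    intro y
    rw [hF y, mulVecE_smul, mulVecE_exp_smul _ _ hφk, smul_smul, ← Complex.exp_add, hEfun]
    congr 2
  constructor
  · rw [hFE x, norm_smul, hφ, mul_one]
    have hz : (I * lam * ((⟪x, k⟫ : ℝ) : ℂ) - I * ((ξ ((⟪x, k⟫ : ℝ) + φf x) : ℝ) : ℂ))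
        = ((lam * (⟪x, k⟫ : ℝ) - ξ ((⟪x, k⟫ : ℝ) + φf x) : ℝ) : ℂ) * I := by
      push_cast; ring
    show ‖Complex.exp (I * lam * ((⟪x, k⟫ : ℝ) : ℂ)
        - I * ((ξ ((⟪x, k⟫ : ℝ) + φf x) : ℝ) : ℂ))‖ = 1
    rw [hz, Complex.norm_exp]
    simp
  · -- derivative computation
    have hφx : DifferentiableAt ℝ φf x :=
      (hφf.contDiffAt ((Metric.isOpen_ball).mem_nhds hx)).differentiableAt (by simp)
    set φ' : R3 →L[ℝ] ℝ := fderiv ℝ φf x with hφ'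
    have hφd : HasFDerivAt φf φ' x := hφx.hasFDerivAt
    have hkx : HasFDerivAt (fun y : R3 => (⟪y, k⟫ : ℝ)) (innerSL ℝ k) x := by
      have h : (fun y : R3 => (⟪y, k⟫ : ℝ)) = fun y => (innerSL ℝ k) y := by
        funext y; exact (real_inner_comm y k).symm
      rw [h]
      exact (innerSL ℝ k).hasFDerivAt
    have hsd : HasFDerivAt (fun y : R3 => (⟪y, k⟫ : ℝ) + φf y) (innerSL ℝ k + φ') x :=
      hkx.add hφd
    set sx : ℝ := (⟪x, k⟫ : ℝ) + φf x with hsx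
    have hξd : ∀ u : ℝ, HasDerivAt ξ (η u) u := by
      intro u
      have h1 : ξ = fun t => ∫ τ in (0:ℝ)..t, η τ := funext hξ
      rw [h1]
      exact (hη.continuous.integral_hasStrictDerivAt 0 u).hasDerivAt
    have hξc : HasFDerivAt (fun y : R3 => ξ ((⟪y, k⟫ : ℝ) + φf y))
        (η sx • (innerSL ℝ k + φ')) x :=
      (hξd sx).comp_hasFDerivAt x hsd
    have h1 : HasFDerivAt (fun y : R3 => (((⟪y, k⟫ : ℝ) : ℂ)))
        (Complex.ofRealCLM.comp (innerSL ℝ k)) x :=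
      Complex.ofRealCLM.hasFDerivAt.comp x hkx
    have h2 := h1.const_mul (I * lam)
    have h3 : HasFDerivAt (fun y : R3 => ((ξ ((⟪y, k⟫ : ℝ) + φf y) : ℝ) : ℂ))
        (Complex.ofRealCLM.comp (η sx • (innerSL ℝ k + φ'))) x :=
      Complex.ofRealCLM.hasFDerivAt.comp x hξc
    have h4 := h3.const_mul I
    have hh := (h2.sub h4).cexp
    have hFd := hh.smul_const φ₀
    have hFfun : F = fun y => Complex.exp
        (I * ↑lam * ((⟪y, k⟫ : ℝ) : ℂ) - I * ((ξ ((⟪y, k⟫ : ℝ) + φf y) : ℝ) : ℂ)) • φ₀ := by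
      funext y; rw [hFE y, hEfun]
    simp only [Pi.sub_apply] at hFd
    rw [← hFfun] at hFd
    have hfd := hFd.fderiv
    have hEval : ∀ j : Fin 3, fderiv ℝ F x (EuclideanSpace.single j 1)
        = (I * (Efun x * ((((lam : ℂ) - (η sx : ℂ)) * (k j : ℂ))
            - (η sx : ℂ) * ((φ' (EuclideanSpace.single j 1) : ℝ) : ℂ)))) • φ₀ := by
      intro j
      rw [hfd]
      have hinner : (innerSL ℝ k) (EuclideanSpace.single j 1) = k j := by
        simp [EuclideanSpace.inner_single_right]
      simp only [ContinuousLinearMap.smulRight_apply, ContinuousLinearMap.smul_apply,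
        ContinuousLinearMap.sub_apply, ContinuousLinearMap.comp_apply,
        ContinuousLinearMap.add_apply, Complex.ofRealCLM_apply, hinner, hEfun]
      congr 1
      simp only [smul_eq_mul]
      push_cast
      ring
    -- final algebraic identity
    have hnegI : ∀ c : ℂ, (-I) * (I * c) = c := fun c => by
      rw [← mul_assoc, neg_mul, Complex.I_mul_I, neg_neg, one_mul]
    rw [diracOp, hFE x, hqt x, mulVecE_mul_s19, mulVecE_smul _ (Efun x) φ₀, hφk,
      mulVecE_smul, mulVecE_sum]
    have hAsm : ∀ j : Fin 3,
        mulVecE (((φ' (EuclideanSpace.single j 1) : ℝ) : ℂ) • diracAlpha j) φ₀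
          = ((φ' (EuclideanSpace.single j 1) : ℝ) : ℂ) • mulVecE (diracAlpha j) φ₀ :=
      fun j => mulVecE_smulM _ _ _
    simp only [hAsm, hEval, mulVecE_smul]
    have hφ0 : φ₀ = ∑ j, (k j : ℂ) • mulVecE (diracAlpha j) φ₀ := by
      conv_lhs => rw [← hφk]
      rw [alphaDot, mulVecE_sum]
      exact Finset.sum_congr rfl fun j _ => (mulVecE_smulM _ _ _)
    conv_rhs => rw [show (Efun x • φ₀)
        = Efun x • ∑ j, (k j : ℂ) • mulVecE (diracAlpha j) φ₀ from by rw [← hφ0]]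
    simp only [Finset.smul_sum, smul_smul, ← Finset.sum_sub_distrib]
    refine Finset.sum_congr rfl fun j _ => ?_
    rw [← sub_smul, ← sub_smul]
    congr 1
    rw [hnegI]
    ring
end
end
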